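/- arXiv:0905.0829 — 5 statements merged into one kernel-verified Lean document; each statement's English description precedes it below -/
import Mathlib

section
/- Let α > 0 and β > 0. Then there exists a unique real number K with K > α + β satisfying β · ∑_{n=1}^∞ 1/(K n² − α) = 1. -/
/-!
For `K > α ≥ 0` every term of `F(K) = ∑_{n ≥ 1} 1 / (K n² - α)` is positive and bounded by
`1 / ((K - α) n²)`. Hence `F` is continuous and strictly decreasing on `(α, ∞)` and tends to
`0` at infinity, while its first term alone gives `β F(α + β) > 1`. The intermediate value
theorem yields a solution of `β F(K) = 1` beyond `α + β`, and strict monotonicity makes it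
unique.
-/

open Set Filter Topology

noncomputable def invQuadSum (α K : ℝ) : ℝ :=
  ∑' n : ℕ+, 1 / (K * ((n : ℕ) : ℝ) ^ 2 - α)

lemma summable_pnat_one_div_sq : Summable fun n : ℕ+ => 1 / ((n : ℕ) : ℝ) ^ 2 :=
  (Real.summable_one_div_nat_pow.mpr one_lt_two).comp_injective PNat.coe_injective

lemma one_le_sq_pnat (n : ℕ+) : (1 : ℝ) ≤ ((n : ℕ) : ℝ) ^ 2 :=
  one_le_pow₀ (by exact_mod_cast n.pos)

section

variable {α c K : ℝ}

lemma sub_mul_sq_le_mul_sq_sub (hα : 0 ≤ α) (n : ℕ+) :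
    (K - α) * ((n : ℕ) : ℝ) ^ 2 ≤ K * ((n : ℕ) : ℝ) ^ 2 - α := by
  nlinarith [one_le_sq_pnat n]

lemma mul_sq_sub_pos (hα : 0 ≤ α) (hK : α < K) (n : ℕ+) :
    0 < K * ((n : ℕ) : ℝ) ^ 2 - α := by
  nlinarith [sub_mul_sq_le_mul_sq_sub (K := K) hα n, one_le_sq_pnat n]

lemma one_div_mul_sq_sub_le (hα : 0 ≤ α) (hc : α < c) (hK : c ≤ K) (n : ℕ+) :
    1 / (K * ((n : ℕ) : ℝ) ^ 2 - α) ≤ 1 / (c - α) * (1 / ((n : ℕ) : ℝ) ^ 2) := by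
  rw [one_div_mul_one_div]
  apply one_div_le_one_div_of_le (mul_pos (sub_pos.2 hc) (by positivity))
  nlinarith [sub_mul_sq_le_mul_sq_sub (K := K) hα n, one_le_sq_pnat n]

lemma summable_one_div_mul_sq_sub (hα : 0 ≤ α) (hK : α < K) :
    Summable fun n : ℕ+ => 1 / (K * ((n : ℕ) : ℝ) ^ 2 - α) :=
  .of_nonneg_of_le (fun n => (one_div_pos.2 (mul_sq_sub_pos hα hK n)).le)
    (one_div_mul_sq_sub_le hα hK le_rfl) (summable_pnat_one_div_sq.mul_left _)

lemma invQuadSum_nonneg (hα : 0 ≤ α) (hK : α < K) : 0 ≤ invQuadSum α K :=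
  tsum_nonneg fun n => (one_div_pos.2 (mul_sq_sub_pos hα hK n)).le

lemma invQuadSum_le (hα : 0 ≤ α) (hK : α < K) :
    invQuadSum α K ≤ 1 / (K - α) * ∑' n : ℕ+, 1 / ((n : ℕ) : ℝ) ^ 2 := by
  rw [← tsum_mul_left]
  exact (summable_one_div_mul_sq_sub hα hK).tsum_le_tsum (one_div_mul_sq_sub_le hα hK le_rfl)
    (summable_pnat_one_div_sq.mul_left _)

lemma one_div_sub_lt_invQuadSum (hα : 0 ≤ α) (hK : α < K) :
    1 / (K - α) < invQuadSum α K := by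
  have single_le (n : ℕ+) :
      (Pi.single 1 (1 / (K - α)) : ℕ+ → ℝ) n ≤ 1 / (K * ((n : ℕ) : ℝ) ^ 2 - α) := by
    rcases eq_or_ne n 1 with rfl | hn
    · simp
    · simpa [hn] using (mul_sq_sub_pos hα hK n).le
  calc 1 / (K - α) = ∑' n : ℕ+, (Pi.single 1 (1 / (K - α)) : ℕ+ → ℝ) n :=
        (tsum_pi_single _ _).symm
    _ < invQuadSum α K :=
      Summable.tsum_lt_tsum (i := 2) single_le
        (by simpa using mul_sq_sub_pos hα hK 2) (hasSum_pi_single _ _).summable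
        (summable_one_div_mul_sq_sub hα hK)

lemma invQuadSum_strictAntiOn (hα : 0 ≤ α) : StrictAntiOn (invQuadSum α) (Ioi α) := by
  intro K hK K' hK' hlt
  have term_lt (n : ℕ+) :
      1 / (K' * ((n : ℕ) : ℝ) ^ 2 - α) < 1 / (K * ((n : ℕ) : ℝ) ^ 2 - α) :=
    one_div_lt_one_div_of_lt (mul_sq_sub_pos hα hK n) (by gcongr)
  exact Summable.tsum_lt_tsum (i := 1) (fun n => (term_lt n).le) (term_lt 1)
    (summable_one_div_mul_sq_sub hα hK') (summable_one_div_mul_sq_sub hα hK)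

lemma continuousOn_invQuadSum (hα : 0 ≤ α) (hc : α < c) :
    ContinuousOn (invQuadSum α) (Ici c) := by
  refine continuousOn_tsum (fun n => ?_) (summable_pnat_one_div_sq.mul_left (1 / (c - α)))
    fun n K hK => ?_
  · exact continuousOn_const.div (by fun_prop)
      fun K hK => (mul_sq_sub_pos hα (hc.trans_le hK) n).ne'
  · rw [Real.norm_of_nonneg (one_div_pos.2 (mul_sq_sub_pos hα (hc.trans_le hK) n)).le]
    exact one_div_mul_sq_sub_le hα hc hK n

lemma tendsto_invQuadSum_atTop (hα : 0 ≤ α) : Tendsto (invQuadSum α) atTop (𝓝 0) := by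
  set S := ∑' n : ℕ+, 1 / ((n : ℕ) : ℝ) ^ 2
  have upper : Tendsto (fun K => 1 / (K - α) * S) atTop (𝓝 0) := by
    rw [← zero_mul S]
    exact (tendsto_const_nhds.div_atTop
      (tendsto_atTop_add_const_right _ (-α) tendsto_id)).mul_const S
  exact tendsto_of_tendsto_of_tendsto_of_le_of_le' tendsto_const_nhds upper
    ((eventually_gt_atTop α).mono fun K hK => invQuadSum_nonneg hα hK)
    ((eventually_gt_atTop α).mono fun K hK => invQuadSum_le hα hK)

end

theorem stmt_0 (α β : ℝ) (hα : 0 < α) (hβ : 0 < β) :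
    ∃! K : ℝ, K > α + β ∧ β * ∑' n : ℕ+, 1 / (K * ((n : ℕ) : ℝ) ^ 2 - α) = 1 := by
  have hαβ : α < α + β := lt_add_of_pos_right α hβ
  have at_start : 1 < β * invQuadSum α (α + β) := by
    have h := one_div_sub_lt_invQuadSum hα.le hαβ
    rwa [add_sub_cancel_left, ← mul_lt_mul_iff_of_pos_left hβ, mul_one_div_cancel hβ.ne'] at h
  obtain ⟨b, at_end, hb⟩ :=
    ((((tendsto_invQuadSum_atTop hα.le).const_mul β).eventually_lt_const (u := 1) (by simp)).and
      (eventually_gt_atTop (α + β))).exists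
  obtain ⟨K, ⟨hK, -⟩, hK1⟩ := intermediate_value_Ioo' hb.le
    (continuousOn_const.mul ((continuousOn_invQuadSum hα.le hαβ).mono Icc_subset_Ici_self))
    ⟨at_end, at_start⟩
  refine ⟨K, ⟨hK, hK1⟩, fun K' ⟨hK', hK'1⟩ => ?_⟩
  exact (invQuadSum_strictAntiOn hα.le).injOn (hαβ.trans hK') (hαβ.trans hK)
    (mul_left_cancel₀ hβ.ne' (hK'1.trans hK1.symm))
end

section
/- Let α > 0, β > 0, and let K > α + β be the unique solution of β · ∑_{n=1}^∞ 1/(K n² − α) = 1. Then for every square-summable real sequence (x_n)_{n≥1}, one has α · ∑_{n=1}^∞ x_n²/n² + β · (∑_{n=1}^∞ x_n/n)² ≤ K · ∑_{n=1}^∞ x_n². -/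
/-!
Put `c n = K n² - α > 0`. Writing `x n / n` as the product of `x n √(c n) / n` and `1 / √(c n)`,
Cauchy–Schwarz gives `(∑ x n / n)² ≤ (∑ c n x n² / n²) (∑ 1 / c n)`. The second factor is `1 / β`
by the choice of `K`, and the first is `K ∑ x n² - α ∑ x n² / n²`.
-/

open Finset Filter

section CauchySchwarz

variable {ι : Type*} {r f g : ι → ℝ}

theorem summable_of_sq_le_mul (hf : ∀ i, 0 ≤ f i) (hg : ∀ i, 0 ≤ g i)
    (h : ∀ i, r i ^ 2 ≤ f i * g i) (hfs : Summable f) (hgs : Summable g) : Summable r := by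
  refine Summable.of_norm_bounded ((hfs.add hgs).div_const 2) fun i => ?_
  have := two_mul_le_add_of_sq_le_mul (hf i) (hg i) ((sq_abs (r i)).trans_le (h i))
  rw [Real.norm_eq_abs]
  linarith

theorem tsum_sq_le_tsum_mul_tsum_of_sq_le_mul (hf : ∀ i, 0 ≤ f i) (hg : ∀ i, 0 ≤ g i)
    (h : ∀ i, r i ^ 2 ≤ f i * g i) (hfs : Summable f) (hgs : Summable g) :
    (∑' i, r i) ^ 2 ≤ (∑' i, f i) * ∑' i, g i := by
  have hr := (summable_of_sq_le_mul hf hg h hfs hgs).hasSum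
  refine le_of_tendsto (hr.pow 2) (Eventually.of_forall fun s => ?_)
  calc (∑ i ∈ s, r i) ^ 2 ≤ (∑ i ∈ s, f i) * ∑ i ∈ s, g i :=
        sum_sq_le_sum_mul_sum_of_sq_le_mul s (fun i _ => hf i) (fun i _ => hg i) fun i _ => h i
    _ ≤ (∑' i, f i) * ∑' i, g i :=
        mul_le_mul (hfs.sum_le_tsum s fun i _ => hf i) (hgs.sum_le_tsum s fun i _ => hg i)
          (sum_nonneg fun i _ => hg i) (tsum_nonneg hf)

end CauchySchwarz

theorem stmt_1 (α β K : ℝ) (hα : 0 < α) (hβ : 0 < β) (hK : K > α + β)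
    (hKeq : β * ∑' n : ℕ+, 1 / (K * ((n : ℕ) : ℝ) ^ 2 - α) = 1)
    (x : ℕ+ → ℝ) (hx : Summable fun n : ℕ+ => (x n) ^ 2) :
    α * ∑' n : ℕ+, (x n) ^ 2 / ((n : ℕ) : ℝ) ^ 2
      + β * (∑' n : ℕ+, x n / ((n : ℕ) : ℝ)) ^ 2
      ≤ K * ∑' n : ℕ+, (x n) ^ 2 := by
  have hsq : ∀ n : ℕ+, (1 : ℝ) ≤ ((n : ℕ) : ℝ) ^ 2 := fun n =>
    one_le_pow₀ (by exact_mod_cast one_le)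
  have hpos : ∀ n : ℕ+, 0 < K * ((n : ℕ) : ℝ) ^ 2 - α := fun n => by nlinarith [hsq n]
  have hinv : Summable fun n : ℕ+ => 1 / (K * ((n : ℕ) : ℝ) ^ 2 - α) := by
    by_contra h
    rw [tsum_eq_zero_of_not_summable h, mul_zero] at hKeq
    exact zero_ne_one hKeq
  have hxn : Summable fun n : ℕ+ => x n ^ 2 / ((n : ℕ) : ℝ) ^ 2 :=
    hx.of_nonneg_of_le (fun n => by positivity) fun n => div_le_self (sq_nonneg _) (hsq n)
  have hweighted := (hx.mul_left K).sub (hxn.mul_left α)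
  have hterm : ∀ n : ℕ+, K * x n ^ 2 - α * (x n ^ 2 / ((n : ℕ) : ℝ) ^ 2)
      = x n ^ 2 * (K * ((n : ℕ) : ℝ) ^ 2 - α) / ((n : ℕ) : ℝ) ^ 2 := fun n => by
    field_simp [(one_pos.trans_le (hsq n)).ne']
  have hCS := tsum_sq_le_tsum_mul_tsum_of_sq_le_mul (r := fun n : ℕ+ => x n / ((n : ℕ) : ℝ))
    (fun n => by rw [hterm]; have := hpos n; positivity) (fun n => (one_div_pos.2 (hpos n)).le)
    (fun n => by rw [hterm, div_mul_div_comm, mul_one, mul_div_mul_right _ _ (hpos n).ne', div_pow])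
    hweighted hinv
  rw [(hx.mul_left K).tsum_sub (hxn.mul_left α), tsum_mul_left, tsum_mul_left] at hCS
  have := mul_le_mul_of_nonneg_left hCS hβ.le
  rw [mul_left_comm, hKeq, mul_one] at this
  linarith
end

section
/- Let α > 0, β > 0, and let K > α + β satisfy β · ∑_{n=1}^∞ 1/(K n² − α) = 1. Equality α ∑ x_n²/n² + β (∑ x_n/n)² = K ∑ x_n² holds for a square-summable sequence (x_n) if and only if there exists C ∈ ℝ such that x_n = C/(K n − α/n) for all n ≥ 1. -/
/-!
Put `w n = K n² - α > 0` and `y n = x n / n`, so that `K x n² - α x n² / n² = w n y n²`.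
Since `β ∑ 1 / w n = 1`, completing the square gives
`∑ w n y n² - β (∑ y n)² = ∑ w n (y n - β (∑ y) / w n)²`,
a sum of nonnegative terms; it vanishes iff `y n = c / w n` for a constant `c`, which is the
claimed form of `x n`.
-/

theorem Summable.mul_of_summable_sq {ι : Type*} {f g : ι → ℝ} (hf : Summable fun i => f i ^ 2)
    (hg : Summable fun i => g i ^ 2) : Summable fun i => f i * g i := by
  refine .of_norm_bounded ((hf.add hg).div_const 2) fun i => ?_
  have := two_mul_le_add_sq |f i| |g i|
  rw [Real.norm_eq_abs, abs_mul]
  simp only [sq_abs] at this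
  linarith

section WeightedSquares

variable {ι : Type*} {w y : ι → ℝ} {β : ℝ}

theorem hasSum_mul_sq_sub_div (hw : ∀ i, w i ≠ 0) (hwy : Summable fun i => w i * y i ^ 2)
    (hy : Summable y) (hinv : Summable fun i => 1 / w i) (hβ : β * ∑' i, 1 / w i = 1) :
    HasSum (fun i => w i * (y i - β * (∑' j, y j) / w i) ^ 2)
      (∑' i, w i * y i ^ 2 - β * (∑' i, y i) ^ 2) := by
  set S := ∑' j, y j
  have hsum := (hwy.hasSum.sub (hy.hasSum.mul_left (2 * β * S))).add
    (hinv.hasSum.mul_left ((β * S) ^ 2))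
  have hpoint : ∀ i, w i * (y i - β * S / w i) ^ 2
      = w i * y i ^ 2 - 2 * β * S * y i + (β * S) ^ 2 * (1 / w i) := fun i => by
    field_simp [hw i]
    ring
  have hvalue : ∑' i, w i * y i ^ 2 - β * S ^ 2
      = ∑' i, w i * y i ^ 2 - 2 * β * S * S + (β * S) ^ 2 * ∑' i, 1 / w i := by
    linear_combination (-(β * S ^ 2)) * hβ
  rw [funext hpoint, hvalue]
  exact hsum

theorem mul_sq_tsum_eq_tsum_mul_sq_iff (hw : ∀ i, 0 < w i)
    (hwy : Summable fun i => w i * y i ^ 2) (hy : Summable y)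
    (hinv : Summable fun i => 1 / w i) (hβ : β * ∑' i, 1 / w i = 1) :
    β * (∑' i, y i) ^ 2 = ∑' i, w i * y i ^ 2 ↔ ∃ c, ∀ i, y i = c / w i := by
  have hsq := hasSum_mul_sq_sub_div (fun i => (hw i).ne') hwy hy hinv hβ
  have hterm : ∀ i c, w i * (y i - c / w i) ^ 2 = 0 ↔ y i = c / w i := fun i c => by
    simp [(hw i).ne', sub_eq_zero]
  have hnonneg : ∀ i, 0 ≤ w i * (y i - β * (∑' j, y j) / w i) ^ 2 :=
    fun i => mul_nonneg (hw i).le (sq_nonneg _)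
  calc β * (∑' i, y i) ^ 2 = ∑' i, w i * y i ^ 2
      ↔ HasSum (fun i => w i * (y i - β * (∑' j, y j) / w i) ^ 2) 0 := by
        rw [eq_comm, ← sub_eq_zero]
        exact ⟨fun h => h ▸ hsq, hsq.unique⟩
    _ ↔ ∀ i, y i = β * (∑' j, y j) / w i := by
        rw [hasSum_zero_iff_of_nonneg hnonneg, funext_iff]
        exact forall_congr' fun i => hterm i _
    _ ↔ ∃ c, ∀ i, y i = c / w i := by
        refine ⟨fun h => ⟨_, h⟩, fun ⟨c, hc⟩ => ?_⟩
        have hβS : β * ∑' j, y j = c := by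
          simp only [tsum_congr hc, div_eq_mul_one_div c, tsum_mul_left]
          linear_combination c * hβ
        rwa [hβS]

end WeightedSquares

section PNatSequences

variable {x : ℕ+ → ℝ}

theorem summable_one_div_pnat_sq : Summable fun n : ℕ+ => (1 / ((n : ℕ) : ℝ)) ^ 2 := by
  simp only [one_div_pow]
  exact (Real.summable_one_div_nat_pow.mpr one_lt_two).comp_injective PNat.coe_injective

theorem summable_div_pnat_of_summable_sq (hx : Summable fun n : ℕ+ => x n ^ 2) :
    Summable fun n : ℕ+ => x n / ((n : ℕ) : ℝ) := by
  simpa only [div_eq_mul_one_div (x _)] using hx.mul_of_summable_sq summable_one_div_pnat_sq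

theorem summable_sq_div_pnat_sq_of_summable_sq (hx : Summable fun n : ℕ+ => x n ^ 2) :
    Summable fun n : ℕ+ => x n ^ 2 / ((n : ℕ) : ℝ) ^ 2 := by
  refine .of_nonneg_of_le (fun n => by positivity) (fun n => ?_) hx
  exact div_le_self (sq_nonneg _) (one_le_pow₀ (Nat.one_le_cast.mpr n.pos))

end PNatSequences

theorem div_eq_div_mul_sq_sub_iff {x c K α n : ℝ} (hn : n ≠ 0) :
    x / n = c / (K * n ^ 2 - α) ↔ x = c / (K * n - α / n) := by
  have : K * n - α / n = (K * n ^ 2 - α) / n := by field_simp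
  rw [div_eq_iff hn, this, div_div_eq_mul_div, mul_div_right_comm]

theorem stmt_2 (α β K : ℝ) (hα : 0 < α) (hβ : 0 < β) (hK : K > α + β)
    (hKeq : β * ∑' n : ℕ+, 1 / (K * ((n : ℕ) : ℝ) ^ 2 - α) = 1)
    (x : ℕ+ → ℝ) (hx : Summable fun n : ℕ+ => (x n) ^ 2) :
    α * ∑' n : ℕ+, (x n) ^ 2 / ((n : ℕ) : ℝ) ^ 2
      + β * (∑' n : ℕ+, x n / ((n : ℕ) : ℝ)) ^ 2
      = K * ∑' n : ℕ+, (x n) ^ 2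
    ↔ ∃ C : ℝ, ∀ n : ℕ+, x n = C / (K * ((n : ℕ) : ℝ) - α / ((n : ℕ) : ℝ)) := by
  have hn : ∀ n : ℕ+, (1 : ℝ) ≤ ((n : ℕ) : ℝ) := fun n => Nat.one_le_cast.mpr n.pos
  have hw : ∀ n : ℕ+, 0 < K * ((n : ℕ) : ℝ) ^ 2 - α := fun n => by
    nlinarith [one_le_pow₀ (n := 2) (hn n)]
  -- the tsum in `hKeq` would be `0` if the series diverged
  have hinv : Summable fun n : ℕ+ => 1 / (K * ((n : ℕ) : ℝ) ^ 2 - α) := by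
    by_contra h
    rw [tsum_eq_zero_of_not_summable h, mul_zero] at hKeq
    exact zero_ne_one hKeq
  have hwy : ∀ n : ℕ+, (K * ((n : ℕ) : ℝ) ^ 2 - α) * (x n / ((n : ℕ) : ℝ)) ^ 2
      = K * x n ^ 2 - α * (x n ^ 2 / ((n : ℕ) : ℝ) ^ 2) := fun n => by
    field_simp [(zero_lt_one.trans_le (hn n)).ne']
  have hx' := summable_sq_div_pnat_sq_of_summable_sq hx
  have key := mul_sq_tsum_eq_tsum_mul_sq_iff hw
    (by simpa only [hwy] using (hx.mul_left K).sub (hx'.mul_left α))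
    (summable_div_pnat_of_summable_sq hx) hinv hKeq
  rw [tsum_congr hwy, (hx.mul_left K).tsum_sub (hx'.mul_left α), tsum_mul_left,
    tsum_mul_left] at key
  rw [← eq_sub_iff_add_eq', key]
  exact exists_congr fun C => forall_congr' fun n =>
    div_eq_div_mul_sq_sub_iff (zero_lt_one.trans_le (hn n)).ne'
end

section
/- Let α > 0, β > 0, l ∈ ℕ⁺, and let k_l be the maximum of α ∑_{n=1}^l x_n²/n² + β (∑_{n=1}^l x_n/n)² over all (x_1,…,x_l) ∈ ℝ^l with ∑_{n=1}^l x_n² = 1. Then k_l satisfies β ∑_{n=1}^l 1/(k_l n² − α) = 1, and the maximum is attained exactly at the two points x_n = ± [∑_{m=1}^l (k_l m − α/m)^{-2}]^{-1/2} · 1/(k_l n − α/n), n = 1,…,l. -/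
/-!
Write the form as `Q x = ∑ dₙ xₙ² + β ⟨a, x⟩²` with `dₙ = α / n²` and `aₙ = 1 / n`. Testing
`Q ≤ k ‖·‖²` on a basis vector gives `k > dₙ`, and then, with `wₙ = aₙ / (k - dₙ)` and
`D = ∑ aₙ² / (k - dₙ)`, completing the square gives
`∑ (k - dₙ) (xₙ - t wₙ)² = k ‖x‖² - Q x + β ⟨a, x⟩² - 2 t ⟨a, x⟩ + t² D`.
At `x = w, t = 1` this yields `β D ≤ 1`; at a maximiser, `t = ⟨a, x⟩ / D` yields `β D ≥ 1`
(this is Cauchy–Schwarz). Once `β D = 1`, the choice `t = β ⟨a, x⟩` turns the identity into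
`k - Q x = ∑ (k - dₙ) (xₙ - t wₙ)²` on the unit sphere, so the maximisers are the two unit
multiples of `w`.
-/

open Finset

section DiagRankOneForm

variable {ι : Type*} {s : Finset ι} {d a : ι → ℝ} {β k : ℝ}

def diagRankOneForm (s : Finset ι) (d a : ι → ℝ) (β : ℝ) (x : ι → ℝ) : ℝ :=
  ∑ i ∈ s, d i * x i ^ 2 + β * (∑ i ∈ s, a i * x i) ^ 2

lemma diagRankOneForm_smul (c : ℝ) (x : ι → ℝ) :
    diagRankOneForm s d a β (c • x) = c ^ 2 * diagRankOneForm s d a β x := by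
  have hlin : ∑ i ∈ s, a i * (c * x i) = c * ∑ i ∈ s, a i * x i := by
    rw [mul_sum]; exact sum_congr rfl fun i _ => by ring
  have hquad : ∑ i ∈ s, d i * (c * x i) ^ 2 = c ^ 2 * ∑ i ∈ s, d i * x i ^ 2 := by
    rw [mul_sum]; exact sum_congr rfl fun i _ => by ring
  simp only [diagRankOneForm, Pi.smul_apply, smul_eq_mul, hlin, hquad]
  ring

lemma diagRankOneForm_le_of_isGreatest
    (hk : IsGreatest {v | ∃ x : ι → ℝ, ∑ i ∈ s, x i ^ 2 = 1 ∧ v = diagRankOneForm s d a β x} k)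
    (x : ι → ℝ) : diagRankOneForm s d a β x ≤ k * ∑ i ∈ s, x i ^ 2 := by
  rcases (sum_nonneg fun i _ => sq_nonneg (x i) : 0 ≤ ∑ i ∈ s, x i ^ 2).eq_or_lt with hN | hN
  · have hx : ∀ i ∈ s, x i = 0 := fun i hi => pow_eq_zero_iff two_ne_zero |>.mp <|
      (sum_eq_zero_iff_of_nonneg fun i _ => sq_nonneg (x i)).mp hN.symm i hi
    simp +contextual [diagRankOneForm, sum_eq_zero, hx]
  · have hunit : ∑ i ∈ s, ((Real.sqrt (∑ i ∈ s, x i ^ 2))⁻¹ • x) i ^ 2 = 1 := by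
      simp only [Pi.smul_apply, smul_eq_mul, mul_pow, ← mul_sum, inv_pow, Real.sq_sqrt hN.le]
      exact inv_mul_cancel₀ hN.ne'
    have := hk.2 ⟨_, hunit, rfl⟩
    rwa [diagRankOneForm_smul, inv_pow, Real.sq_sqrt hN.le, inv_mul_le_iff₀ hN, mul_comm] at this

lemma lt_of_diagRankOneForm_le (hβ : 0 < β)
    (hle : ∀ x, diagRankOneForm s d a β x ≤ k * ∑ i ∈ s, x i ^ 2)
    {i : ι} (hi : i ∈ s) (ha : a i ≠ 0) : d i < k := by
  classical
  have := hle fun j => if j = i then 1 else 0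
  simp [diagRankOneForm, hi] at this
  have : 0 < β * a i ^ 2 := by positivity
  linarith

lemma sum_sub_mul_sub_sq (hd : ∀ i ∈ s, d i ≠ k) (x : ι → ℝ) (t : ℝ) :
    ∑ i ∈ s, (k - d i) * (x i - t * (a i / (k - d i))) ^ 2
      = k * ∑ i ∈ s, x i ^ 2 - diagRankOneForm s d a β x + β * (∑ i ∈ s, a i * x i) ^ 2
        - 2 * t * ∑ i ∈ s, a i * x i + t ^ 2 * ∑ i ∈ s, a i ^ 2 / (k - d i) := by
  have hterm : ∀ i ∈ s, (k - d i) * (x i - t * (a i / (k - d i))) ^ 2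
      = k * x i ^ 2 - d i * x i ^ 2 - 2 * t * (a i * x i) + t ^ 2 * (a i ^ 2 / (k - d i)) :=
    fun i hi => by
      have : k - d i ≠ 0 := sub_ne_zero.mpr (hd i hi).symm
      field_simp
      ring
  simp only [sum_congr rfl hterm, sum_add_distrib, sum_sub_distrib, ← mul_sum, diagRankOneForm]
  ring

lemma sum_sq_div_sub_pos (hd : ∀ i ∈ s, d i < k) (ha : ∀ i ∈ s, a i ≠ 0) (hs : s.Nonempty) :
    0 < ∑ i ∈ s, a i ^ 2 / (k - d i) :=
  sum_pos (fun i hi => div_pos (pow_two_pos_of_ne_zero (ha i hi)) (sub_pos.mpr (hd i hi))) hs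

lemma mul_sum_sq_div_sub_le_one (hd : ∀ i ∈ s, d i < k)
    (hle : ∀ x, diagRankOneForm s d a β x ≤ k * ∑ i ∈ s, x i ^ 2)
    (hD : 0 < ∑ i ∈ s, a i ^ 2 / (k - d i)) : β * ∑ i ∈ s, a i ^ 2 / (k - d i) ≤ 1 := by
  have hlin : ∑ i ∈ s, a i * (a i / (k - d i)) = ∑ i ∈ s, a i ^ 2 / (k - d i) :=
    sum_congr rfl fun i _ => by ring
  have hw := sum_sub_mul_sub_sq (a := a) (β := β) (fun i hi => (hd i hi).ne)
    (fun i => a i / (k - d i)) 1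
  rw [sum_eq_zero fun i _ => by ring, hlin] at hw
  have := hle fun i => a i / (k - d i)
  nlinarith

lemma one_le_mul_sum_sq_div_sub (hd : ∀ i ∈ s, d i < k)
    (hD : 0 < ∑ i ∈ s, a i ^ 2 / (k - d i)) {x : ι → ℝ} (hx : ∑ i ∈ s, x i ^ 2 = 1)
    (hxk : diagRankOneForm s d a β x = k) : 1 ≤ β * ∑ i ∈ s, a i ^ 2 / (k - d i) := by
  have hsq (t : ℝ) := sum_sub_mul_sub_sq (a := a) (β := β) (fun i hi => (hd i hi).ne) x t
  simp only [hx, hxk, mul_one, sub_self, zero_add] at hsq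
  set S := ∑ i ∈ s, a i * x i
  set D := ∑ i ∈ s, a i ^ 2 / (k - d i)
  have hS : 0 < S ^ 2 := by
    obtain ⟨i, hi, hxi⟩ := exists_ne_zero_of_sum_ne_zero (hx.trans_ne one_ne_zero)
    have hpos : 0 < ∑ i ∈ s, (k - d i) * (x i - 0 * (a i / (k - d i))) ^ 2 :=
      sum_pos' (fun i hi => mul_nonneg (sub_pos.mpr (hd i hi)).le (sq_nonneg _))
        ⟨i, hi, by simpa using mul_pos (sub_pos.mpr (hd i hi)) ((sq_nonneg _).lt_of_ne hxi.symm)⟩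
    rw [hsq] at hpos
    exact (sq_nonneg S).lt_of_ne fun h => by simp [← h] at hpos
  have hnonneg : 0 ≤ ∑ i ∈ s, (k - d i) * (x i - S / D * (a i / (k - d i))) ^ 2 :=
    sum_nonneg fun i hi => mul_nonneg (sub_pos.mpr (hd i hi)).le (sq_nonneg _)
  have hscale : (β * S ^ 2 - 2 * (S / D) * S + (S / D) ^ 2 * D) * D = (β * D - 1) * S ^ 2 := by
    field_simp
    ring
  rw [hsq] at hnonneg
  exact sub_nonneg.mp <| nonneg_of_mul_nonneg_left (hscale ▸ mul_nonneg hnonneg hD.le) hS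

lemma sub_diagRankOneForm_eq_sum (hd : ∀ i ∈ s, d i ≠ k)
    (hD : β * ∑ i ∈ s, a i ^ 2 / (k - d i) = 1) {x : ι → ℝ} (hx : ∑ i ∈ s, x i ^ 2 = 1) :
    k - diagRankOneForm s d a β x = ∑ i ∈ s, (k - d i) *
      (x i - β * (∑ j ∈ s, a j * x j) * (a i / (k - d i))) ^ 2 := by
  rw [sum_sub_mul_sub_sq hd, hx]
  linear_combination (-β * (∑ j ∈ s, a j * x j) ^ 2) * hD

lemma diagRankOneForm_eq_iff (hd : ∀ i ∈ s, d i < k)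
    (hD : β * ∑ i ∈ s, a i ^ 2 / (k - d i) = 1) {x : ι → ℝ} (hx : ∑ i ∈ s, x i ^ 2 = 1) :
    diagRankOneForm s d a β x = k ↔
      (∀ i ∈ s, x i = (Real.sqrt (∑ j ∈ s, (a j / (k - d j)) ^ 2))⁻¹ * (a i / (k - d i))) ∨
      (∀ i ∈ s, x i = -((Real.sqrt (∑ j ∈ s, (a j / (k - d j)) ^ 2))⁻¹ * (a i / (k - d i)))) := by
  set W := ∑ j ∈ s, (a j / (k - d j)) ^ 2
  have hzero : diagRankOneForm s d a β x = k ↔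
      ∀ i ∈ s, x i = β * (∑ j ∈ s, a j * x j) * (a i / (k - d i)) := by
    rw [eq_comm, ← sub_eq_zero, sub_diagRankOneForm_eq_sum (fun i hi => (hd i hi).ne) hD hx,
      sum_eq_zero_iff_of_nonneg fun i hi => mul_nonneg (sub_pos.mpr (hd i hi)).le (sq_nonneg _)]
    exact forall₂_congr fun i hi => by simp [(sub_pos.mpr (hd i hi)).ne', sub_eq_zero]
  have hscale {r : ℝ} (hr : ∀ i ∈ s, x i = r * (a i / (k - d i))) : β * ∑ j ∈ s, a j * x j = r := by
    rw [← mul_one r, ← hD, sum_congr rfl fun i hi => by rw [hr i hi], mul_sum, mul_sum, mul_sum]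
    exact sum_congr rfl fun i _ => by ring
  have hnorm {r : ℝ} (hr : ∀ i ∈ s, x i = r * (a i / (k - d i))) :
      r = (Real.sqrt W)⁻¹ ∨ r = -(Real.sqrt W)⁻¹ := by
    have h1 : r ^ 2 * W = 1 := by
      rw [← hx, mul_sum]
      exact sum_congr rfl fun i hi => by rw [hr i hi]; ring
    apply sq_eq_sq_iff_eq_or_eq_neg.mp
    rw [inv_pow, Real.sq_sqrt (sum_nonneg fun j _ => sq_nonneg _)]
    exact eq_inv_of_mul_eq_one_left h1
  rw [hzero]
  constructor
  · intro hr
    rcases hnorm hr with h | h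
    · exact Or.inl fun i hi => by rw [hr i hi, h]
    · exact Or.inr fun i hi => by rw [hr i hi, h, neg_mul]
  · rintro (hr | hr)
    · exact fun i hi => by rw [hscale hr, hr i hi]
    · simp only [← neg_mul] at hr
      exact fun i hi => by rw [hscale hr, hr i hi]

theorem secular_equation_and_maximizers_of_isGreatest (hβ : 0 < β) (ha : ∀ i ∈ s, a i ≠ 0)
    (hk : IsGreatest {v | ∃ x : ι → ℝ, ∑ i ∈ s, x i ^ 2 = 1 ∧ v = diagRankOneForm s d a β x} k) :
    β * ∑ i ∈ s, a i ^ 2 / (k - d i) = 1 ∧ ∀ x : ι → ℝ, ∑ i ∈ s, x i ^ 2 = 1 →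
      (diagRankOneForm s d a β x = k ↔
        (∀ i ∈ s, x i = (Real.sqrt (∑ j ∈ s, (a j / (k - d j)) ^ 2))⁻¹ * (a i / (k - d i))) ∨
        (∀ i ∈ s, x i = -((Real.sqrt (∑ j ∈ s, (a j / (k - d j)) ^ 2))⁻¹ * (a i / (k - d i))))) := by
  obtain ⟨x₀, hx₀, hx₀k⟩ := hk.1
  have hle := diagRankOneForm_le_of_isGreatest hk
  have hd : ∀ i ∈ s, d i < k := fun i hi => lt_of_diagRankOneForm_le hβ hle hi (ha i hi)
  have hD := sum_sq_div_sub_pos hd ha (nonempty_of_sum_ne_zero (hx₀.trans_ne one_ne_zero))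
  have hD1 := le_antisymm (mul_sum_sq_div_sub_le_one hd hle hD)
    (one_le_mul_sum_sq_div_sub hd hD hx₀ hx₀k.symm)
  exact ⟨hD1, fun x hx => diagRankOneForm_eq_iff hd hD1 hx⟩

end DiagRankOneForm

theorem stmt_5_general (α β : ℝ) (hβ : 0 < β) (l : ℕ) (k : ℝ)
    (hk : IsGreatest
      {v : ℝ | ∃ x : ℕ → ℝ, (∑ n ∈ Finset.Icc 1 l, (x n) ^ 2) = 1 ∧
        v = α * ∑ n ∈ Finset.Icc 1 l, (x n) ^ 2 / (n : ℝ) ^ 2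
            + β * (∑ n ∈ Finset.Icc 1 l, x n / (n : ℝ)) ^ 2} k) :
    β * ∑ n ∈ Finset.Icc 1 l, 1 / (k * (n : ℝ) ^ 2 - α) = 1 ∧
    ∀ x : ℕ → ℝ, (∑ n ∈ Finset.Icc 1 l, (x n) ^ 2) = 1 →
      (α * ∑ n ∈ Finset.Icc 1 l, (x n) ^ 2 / (n : ℝ) ^ 2
          + β * (∑ n ∈ Finset.Icc 1 l, x n / (n : ℝ)) ^ 2 = k
        ↔ (∀ n ∈ Finset.Icc 1 l,
              x n = (Real.sqrt (∑ m ∈ Finset.Icc 1 l, (k * (m : ℝ) - α / (m : ℝ))⁻¹ ^ 2))⁻¹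
                      * (k * (n : ℝ) - α / (n : ℝ))⁻¹)
          ∨ (∀ n ∈ Finset.Icc 1 l,
              x n = -((Real.sqrt (∑ m ∈ Finset.Icc 1 l, (k * (m : ℝ) - α / (m : ℝ))⁻¹ ^ 2))⁻¹
                      * (k * (n : ℝ) - α / (n : ℝ))⁻¹))) := by
  have hform (x : ℕ → ℝ) : α * ∑ n ∈ Icc 1 l, x n ^ 2 / (n : ℝ) ^ 2
      + β * (∑ n ∈ Icc 1 l, x n / (n : ℝ)) ^ 2
      = diagRankOneForm (Icc 1 l) (fun n => α / (n : ℝ) ^ 2) (fun n => (n : ℝ)⁻¹) β x := by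
    rw [diagRankOneForm, mul_sum]
    congr 1
    · exact sum_congr rfl fun n _ => by ring
    · congr 2
      exact sum_congr rfl fun n _ => by ring
  -- at `t = 0` both sides are `0`, as `0⁻¹ = 0`
  have hvec (t : ℝ) : (k * t - α / t)⁻¹ = t⁻¹ / (k - α / t ^ 2) := by
    rcases eq_or_ne t 0 with rfl | ht
    · simp
    · field_simp
  have hsec : ∀ n ∈ Icc 1 l, ((n : ℝ)⁻¹) ^ 2 / (k - α / (n : ℝ) ^ 2) = 1 / (k * (n : ℝ) ^ 2 - α) :=
    fun n hn => by
      have : (n : ℝ) ≠ 0 := by have := (mem_Icc.mp hn).1; positivity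
      field_simp
  simp only [hform, hvec] at hk ⊢
  obtain ⟨hD, hmax⟩ := secular_equation_and_maximizers_of_isGreatest hβ
    (fun n hn => inv_ne_zero (by have := (mem_Icc.mp hn).1; positivity)) hk
  exact ⟨sum_congr rfl hsec ▸ hD, hmax⟩

theorem stmt_5 (α β : ℝ) (hα : 0 < α) (hβ : 0 < β) (l : ℕ) (hl : 1 ≤ l) (k : ℝ)
    (hk : IsGreatest
      {v : ℝ | ∃ x : ℕ → ℝ, (∑ n ∈ Finset.Icc 1 l, (x n) ^ 2) = 1 ∧
        v = α * ∑ n ∈ Finset.Icc 1 l, (x n) ^ 2 / (n : ℝ) ^ 2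
            + β * (∑ n ∈ Finset.Icc 1 l, x n / (n : ℝ)) ^ 2} k) :
    β * ∑ n ∈ Finset.Icc 1 l, 1 / (k * (n : ℝ) ^ 2 - α) = 1 ∧
    ∀ x : ℕ → ℝ, (∑ n ∈ Finset.Icc 1 l, (x n) ^ 2) = 1 →
      (α * ∑ n ∈ Finset.Icc 1 l, (x n) ^ 2 / (n : ℝ) ^ 2
          + β * (∑ n ∈ Finset.Icc 1 l, x n / (n : ℝ)) ^ 2 = k
        ↔ (∀ n ∈ Finset.Icc 1 l,
              x n = (Real.sqrt (∑ m ∈ Finset.Icc 1 l, (k * (m : ℝ) - α / (m : ℝ))⁻¹ ^ 2))⁻¹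
                      * (k * (n : ℝ) - α / (n : ℝ))⁻¹)
          ∨ (∀ n ∈ Finset.Icc 1 l,
              x n = -((Real.sqrt (∑ m ∈ Finset.Icc 1 l, (k * (m : ℝ) - α / (m : ℝ))⁻¹ ^ 2))⁻¹
                      * (k * (n : ℝ) - α / (n : ℝ))⁻¹))) :=
  stmt_5_general α β hβ l k hk
end

section
/- Let Φ(t) = t[I + ∑_{k=1}^∞ t^{2k}/(2k+1)! · (−M^{−1}N)^k] where M is symmetric positive definite, N symmetric positive semidefinite of rank 2 in ℝ^{3×3}, and let h₁, h₂ > 0 be the positive eigenvalues of M^{−1/2} N M^{−1/2} with diagonalization P M^{−1/2} N M^{−1/2} Pᵀ = diag(h₁, h₂, 0), P orthogonal. Then P M^{1/2} Φ(t) M^{−1/2} Pᵀ = diag(sin(√h₁ t)/√h₁, sin(√h₂ t)/√h₂, t), and consequently, for t > 0, Φ(t) is invertible if and only if √h₁ t ≠ kπ and √h₂ t ≠ kπ for all positive integers k. -/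
open Matrix Real

private lemma sumaux (t c : ℝ) :
    Summable (fun k : ℕ => t ^ (2 * (k + 1)) / (Nat.factorial (2 * (k + 1) + 1) : ℝ) * c ^ (k + 1)) := by
  have hbig : Summable (fun k : ℕ => (t ^ 2 * |c|) ^ (k + 1) / (Nat.factorial (k + 1) : ℝ)) :=
    (summable_nat_add_iff 1).mpr (Real.summable_pow_div_factorial (t ^ 2 * |c|))
  apply Summable.of_norm
  refine Summable.of_nonneg_of_le (fun k => norm_nonneg _) (fun k => ?_) hbig
  have h1 : ‖t ^ (2 * (k + 1)) / (Nat.factorial (2 * (k + 1) + 1) : ℝ) * c ^ (k + 1)‖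
      = (t ^ 2 * |c|) ^ (k + 1) / (Nat.factorial (2 * (k + 1) + 1) : ℝ) := by
    rw [norm_mul, norm_div]
    simp only [Real.norm_eq_abs, Nat.abs_cast, abs_pow, pow_mul, sq_abs, mul_pow]
    ring
  rw [h1]
  gcongr
  omega

private lemma hasSumAux (h t : ℝ) (hh : 0 < h) (ht : t ≠ 0) :
    HasSum (fun k : ℕ => t ^ (2 * (k + 1)) / (Nat.factorial (2 * (k + 1) + 1) : ℝ) * (-h) ^ (k + 1))
      (Real.sin (Real.sqrt h * t) / Real.sqrt h / t - 1) := by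
  have hs : Real.sqrt h ≠ 0 := (Real.sqrt_pos.2 hh).ne'
  set f : ℕ → ℝ := fun n => (-h) ^ n * t ^ (2 * n + 1) / (Nat.factorial (2 * n + 1) : ℝ) with hf
  have main : HasSum f (Real.sin (Real.sqrt h * t) / Real.sqrt h) := by
    have H := (Real.hasSum_sin (Real.sqrt h * t)).div_const (Real.sqrt h)
    convert H using 2 with n
    · rfl
    have hsq : (Real.sqrt h) ^ (2 * n) = h ^ n := by
      rw [pow_mul, Real.sq_sqrt hh.le]
    simp only [hf]
    rw [mul_pow, pow_succ (Real.sqrt h) (2 * n), hsq, neg_pow]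
    have hfac : (Nat.factorial (2 * n + 1) : ℝ) ≠ 0 := by
      exact_mod_cast (Nat.factorial_pos _).ne'
    field_simp
  have main2 : HasSum (fun n : ℕ => f (n + 1))
      (Real.sin (Real.sqrt h * t) / Real.sqrt h - t) := by
    rw [hasSum_nat_add_iff 1]
    have h0 : ∑ i ∈ Finset.range 1, f i = t := by simp [hf]
    rw [h0, sub_add_cancel]
    exact main
  have H2 := main2.mul_left t⁻¹
  have heq : t⁻¹ * (Real.sin (Real.sqrt h * t) / Real.sqrt h - t)
      = Real.sin (Real.sqrt h * t) / Real.sqrt h / t - 1 := by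
    rw [mul_sub, inv_mul_cancel₀ ht, mul_comm, ← div_eq_mul_inv]
  rw [heq] at H2
  convert H2 using 1
  · rfl
  funext k
  simp only [hf]
  have hfac : (Nat.factorial (2 * (k + 1) + 1) : ℝ) ≠ 0 := by
    exact_mod_cast (Nat.factorial_pos _).ne'
  field_simp
  ring

private lemma sinNeZeroIff (x : ℝ) (hx : 0 < x) :
    Real.sin x ≠ 0 ↔ ∀ k : ℕ, 1 ≤ k → x ≠ k * Real.pi := by
  rw [Ne, Real.sin_eq_zero_iff]
  push_neg
  constructor
  · intro h k hk heq
    exact h k (by exact_mod_cast heq.symm)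
  · intro h n hn
    have hn0 : 0 < n := by
      by_contra hle
      push_neg at hle
      have : (n : ℝ) * Real.pi ≤ 0 :=
        mul_nonpos_of_nonpos_of_nonneg (by exact_mod_cast hle) Real.pi_pos.le
      linarith [hn ▸ hx]
    have H := h n.toNat (by omega)
    apply H
    rw [← hn]
    congr 1
    exact_mod_cast (Int.toNat_of_nonneg hn0.le).symm

theorem stmt_16 (M N S P : Matrix (Fin 3) (Fin 3) ℝ)
    (hM : M.PosDef) (hN : N.PosSemidef) (hNrank : N.rank = 2)
    (hS : S.PosDef) (hSsq : S * S = M)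
    (hP : P * Pᵀ = 1)
    (h₁ h₂ : ℝ) (hh₁ : 0 < h₁) (hh₂ : 0 < h₂)
    (hdiag : P * (S⁻¹ * N * S⁻¹) * Pᵀ = Matrix.diagonal ![h₁, h₂, 0])
    (Φ : ℝ → Matrix (Fin 3) (Fin 3) ℝ)
    (hΦ : ∀ t, Φ t = t • ((1 : Matrix (Fin 3) (Fin 3) ℝ) +
      Matrix.of fun i j => ∑' k : ℕ,
        t ^ (2 * (k + 1)) / (Nat.factorial (2 * (k + 1) + 1) : ℝ)
          * ((-(M⁻¹ * N)) ^ (k + 1)) i j)) :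
    (∀ t : ℝ, P * S * Φ t * S⁻¹ * Pᵀ =
      Matrix.diagonal ![Real.sin (Real.sqrt h₁ * t) / Real.sqrt h₁,
        Real.sin (Real.sqrt h₂ * t) / Real.sqrt h₂, t]) ∧
    ∀ t : ℝ, 0 < t →
      (IsUnit (Φ t) ↔ ∀ k : ℕ, 1 ≤ k →
        Real.sqrt h₁ * t ≠ k * Real.pi ∧ Real.sqrt h₂ * t ≠ k * Real.pi) := by
  have hdetS : IsUnit S.det := isUnit_iff_ne_zero.mpr hS.det_pos.ne'
  have hSS : S * S⁻¹ = 1 := Matrix.mul_nonsing_inv S hdetS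
  have hSS' : S⁻¹ * S = 1 := Matrix.nonsing_inv_mul S hdetS
  have hPt : Pᵀ * P = 1 := mul_eq_one_comm.mp hP
  set g : Fin 3 → ℝ := ![h₁, h₂, 0] with hg
  set Q : Matrix (Fin 3) (Fin 3) ℝ := P * S with hQ
  set R : Matrix (Fin 3) (Fin 3) ℝ := S⁻¹ * Pᵀ with hR
  have hQR : Q * R = 1 := by
    rw [hQ, hR, mul_assoc, ← mul_assoc S S⁻¹ Pᵀ, hSS, one_mul, hP]
  have hRQ : R * Q = 1 := by
    rw [hR, hQ, mul_assoc, ← mul_assoc Pᵀ P S, hPt, one_mul, hSS']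
  have hcanR : ∀ A : Matrix (Fin 3) (Fin 3) ℝ, R * (Q * A) = A := fun A => by
    rw [← mul_assoc, hRQ, one_mul]
  have hcanQ : ∀ A : Matrix (Fin 3) (Fin 3) ℝ, Q * (R * A) = A := fun A => by
    rw [← mul_assoc, hQR, one_mul]
  have hMinv : M⁻¹ = S⁻¹ * S⁻¹ := by rw [← hSsq, Matrix.mul_inv_rev]
  have hdiag' : P * (S⁻¹ * (N * (S⁻¹ * Pᵀ))) = Matrix.diagonal g := by
    simpa only [mul_assoc] using hdiag
  have hX1 : Q * -(M⁻¹ * N) * R = -(Matrix.diagonal g) := by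
    rw [mul_neg, neg_mul, hMinv, hQ, hR]
    congr 1
    simp only [mul_assoc]
    rw [Matrix.mul_nonsing_inv_cancel_left S _ hdetS]
    exact hdiag'
  have hXn : ∀ n : ℕ, Q * (-(M⁻¹ * N)) ^ n * R = (-(Matrix.diagonal g)) ^ n := by
    intro n
    induction n with
    | zero => rw [pow_zero, pow_zero, mul_one, hQR]
    | succ n ih =>
      have hsplit : (Q * -(M⁻¹ * N) * R) * (Q * (-(M⁻¹ * N)) ^ n * R)
          = Q * ((-(M⁻¹ * N)) * (-(M⁻¹ * N)) ^ n) * R := by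
        simp only [mul_assoc]
        rw [hcanR]
      rw [pow_succ', pow_succ', ← hsplit, ih, hX1]
  have hXrep : ∀ n : ℕ, (-(M⁻¹ * N)) ^ n = R * (-(Matrix.diagonal g)) ^ n * Q := by
    intro n
    rw [← hXn n]
    simp only [mul_assoc]
    rw [hRQ, mul_one, hcanR]
  have hDpow : ∀ n : ℕ, (-(Matrix.diagonal g)) ^ n
      = Matrix.diagonal (fun a => (-(g a)) ^ n) := by
    intro n
    rw [Matrix.diagonal_neg, Matrix.diagonal_pow]
    rfl
  -- Part 1
  have key : ∀ t : ℝ, P * S * Φ t * S⁻¹ * Pᵀ =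
      Matrix.diagonal ![Real.sin (Real.sqrt h₁ * t) / Real.sqrt h₁,
        Real.sin (Real.sqrt h₂ * t) / Real.sqrt h₂, t] := by
    intro t
    by_cases ht : t = 0
    · subst ht
      have h0 : Φ 0 = 0 := by rw [hΦ]; exact zero_smul _ _
      rw [h0, mul_zero, zero_mul, zero_mul]
      have hv : (![Real.sin (Real.sqrt h₁ * 0) / Real.sqrt h₁,
          Real.sin (Real.sqrt h₂ * 0) / Real.sqrt h₂, (0:ℝ)]) = (fun _ => 0) := by
        funext i; fin_cases i <;> simp
      rw [hv, Matrix.diagonal_zero]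
    · set w : Fin 3 → ℝ := fun a => ∑' k : ℕ,
        t ^ (2 * (k + 1)) / (Nat.factorial (2 * (k + 1) + 1) : ℝ) * (-(g a)) ^ (k + 1) with hw
      have hT : (Matrix.of fun i j => ∑' k : ℕ,
          t ^ (2 * (k + 1)) / (Nat.factorial (2 * (k + 1) + 1) : ℝ)
            * ((-(M⁻¹ * N)) ^ (k + 1)) i j)
          = R * Matrix.diagonal w * Q := by
        ext i j
        show (∑' k : ℕ, t ^ (2 * (k + 1)) / (Nat.factorial (2 * (k + 1) + 1) : ℝ)
            * ((-(M⁻¹ * N)) ^ (k + 1)) i j) = (R * Matrix.diagonal w * Q) i j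
        have hentry : ∀ k : ℕ, ((-(M⁻¹ * N)) ^ (k + 1)) i j
            = ∑ a : Fin 3, R i a * (-(g a)) ^ (k + 1) * Q a j := by
          intro k
          rw [hXrep (k + 1), hDpow (k + 1), Matrix.mul_apply]
          refine Finset.sum_congr rfl fun a _ => ?_
          rw [Matrix.mul_diagonal]
        have hRHS : (R * Matrix.diagonal w * Q) i j = ∑ a : Fin 3, R i a * w a * Q a j := by
          rw [Matrix.mul_apply]
          refine Finset.sum_congr rfl fun a _ => ?_
          rw [Matrix.mul_diagonal]
        rw [hRHS]
        calc (∑' k : ℕ, t ^ (2 * (k + 1)) / (Nat.factorial (2 * (k + 1) + 1) : ℝ)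
              * ((-(M⁻¹ * N)) ^ (k + 1)) i j)
            = ∑' k : ℕ, ∑ a : Fin 3, (R i a * Q a j) *
                (t ^ (2 * (k + 1)) / (Nat.factorial (2 * (k + 1) + 1) : ℝ) * (-(g a)) ^ (k + 1)) := by
              refine tsum_congr fun k => ?_
              rw [hentry k, Finset.mul_sum]
              refine Finset.sum_congr rfl fun a _ => ?_
              ring
          _ = ∑ a : Fin 3, (R i a * Q a j) * w a := by
              rw [Summable.tsum_finsetSum (fun a _ => (sumaux t (-(g a))).mul_left _)]
              refine Finset.sum_congr rfl fun a _ => ?_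
              rw [tsum_mul_left]
          _ = ∑ a : Fin 3, R i a * w a * Q a j := by
              refine Finset.sum_congr rfl fun a _ => ?_
              ring
      have hPhi : P * S * Φ t * S⁻¹ * Pᵀ = t • ((1 : Matrix (Fin 3) (Fin 3) ℝ) + Matrix.diagonal w) := by
        rw [mul_assoc (Q * Φ t) S⁻¹ Pᵀ]
        rw [hΦ t, hT]
        simp only [mul_smul_comm, smul_mul_assoc]
        congr 1
        rw [mul_add, mul_one, add_mul, hQR]
        congr 1
        simp only [mul_assoc]
        rw [hQR, mul_one, hcanQ]
      rw [hPhi]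
      have hw0 : w 0 = Real.sin (Real.sqrt h₁ * t) / Real.sqrt h₁ / t - 1 := by
        have := (hasSumAux h₁ t hh₁ ht).tsum_eq
        simp only [hw, hg, Matrix.cons_val_zero]
        exact this
      have hw1 : w 1 = Real.sin (Real.sqrt h₂ * t) / Real.sqrt h₂ / t - 1 := by
        have := (hasSumAux h₂ t hh₂ ht).tsum_eq
        simp only [hw, hg, Matrix.cons_val_one, Matrix.head_cons]
        exact this
      have hw2 : w 2 = 0 := by
        simp only [hw, hg, Matrix.cons_val_two, Matrix.tail_cons, Matrix.head_cons]
        simp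
      have hvec : (fun a => t * (1 + w a)) = ![Real.sin (Real.sqrt h₁ * t) / Real.sqrt h₁,
          Real.sin (Real.sqrt h₂ * t) / Real.sqrt h₂, t] := by
        funext a
        fin_cases a
        · show t * (1 + w 0) = Real.sin (Real.sqrt h₁ * t) / Real.sqrt h₁
          rw [hw0]; field_simp; ring
        · show t * (1 + w 1) = Real.sin (Real.sqrt h₂ * t) / Real.sqrt h₂
          rw [hw1]; field_simp; ring
        · show t * (1 + w 2) = t
          rw [hw2]; ring
      rw [← hvec, ← Matrix.diagonal_one, Matrix.diagonal_add, ← Matrix.diagonal_smul]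
      congr 1
  refine ⟨key, fun t ht => ?_⟩
  have htne : t ≠ 0 := ht.ne'
  have key1 : Q * Φ t * R = Matrix.diagonal ![Real.sin (Real.sqrt h₁ * t) / Real.sqrt h₁,
      Real.sin (Real.sqrt h₂ * t) / Real.sqrt h₂, t] := by
    rw [← mul_assoc]
    exact key t
  have hdetQR : Q.det * R.det = 1 := by
    rw [← Matrix.det_mul, hQR, Matrix.det_one]
  have hdetPhi : (Φ t).det = (Matrix.diagonal ![Real.sin (Real.sqrt h₁ * t) / Real.sqrt h₁,
      Real.sin (Real.sqrt h₂ * t) / Real.sqrt h₂, t]).det := by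
    rw [← key1, Matrix.det_mul, Matrix.det_mul]
    linear_combination (-(Φ t).det) * hdetQR
  rw [Matrix.isUnit_iff_isUnit_det, hdetPhi, Matrix.det_diagonal, Fin.prod_univ_three,
    isUnit_iff_ne_zero]
  simp only [Matrix.cons_val_zero, Matrix.cons_val_one, Matrix.head_cons,
    Matrix.cons_val_two, Matrix.tail_cons]
  have hs1 : Real.sqrt h₁ ≠ 0 := (Real.sqrt_pos.2 hh₁).ne'
  have hs2 : Real.sqrt h₂ ≠ 0 := (Real.sqrt_pos.2 hh₂).ne'
  have i1 := sinNeZeroIff (Real.sqrt h₁ * t) (mul_pos (Real.sqrt_pos.2 hh₁) ht)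
  have i2 := sinNeZeroIff (Real.sqrt h₂ * t) (mul_pos (Real.sqrt_pos.2 hh₂) ht)
  rw [mul_ne_zero_iff, mul_ne_zero_iff, div_ne_zero_iff, div_ne_zero_iff]
  constructor
  · rintro ⟨⟨⟨a, -⟩, b, -⟩, -⟩ k hk
    exact ⟨i1.1 a k hk, i2.1 b k hk⟩
  · intro hAll
    exact ⟨⟨⟨i1.2 fun k hk => (hAll k hk).1, hs1⟩,
      ⟨i2.2 fun k hk => (hAll k hk).2, hs2⟩⟩, htne⟩
end
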